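/- arXiv:1401.7253 — 2 statements merged into one kernel-verified Lean document; each statement's English description precedes it below -/
import Mathlib

section
/- (Condition (C1) for G.) Let Θ be a nonempty measurable set of Lévy triplets with 𝒦 := sup_{(b,c,F)∈Θ} { ∫_{ℝ^d} |z|∧|z|² F(dz) + |b| + |c| } < ∞, and let G be the associated nonlinearity. Let (t_k,x_k,p_k,q_k) → (t,x,p,q) in (0,∞)×ℝ^d×ℝ^d×S^d, and let f_k, f ∈ C^{1,2}_b((0,∞)×ℝ^d) be such that f_k(t_k, x_k + ·) → f(t, x + ·) locally uniformly on ℝ^d, D_x f_k → D_x f and D²_{xx} f_k → D²_{xx} f locally uniformly on (0,∞)×ℝ^d, and (f_k)_{k∈ℕ} is uniformly bounded. Then G(p_k, q_k, f_k(t_k, x_k + ·)) → G(p, q, f(t, x + ·)). -/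
open MeasureTheory Filter Set
open scoped NNReal ENNReal Topology

noncomputable section

/-- Euclidean space `ℝ^d`. -/
abbrev Eu (d : ℕ) : Type := EuclideanSpace ℝ (Fin d)

/-- Matrices carry the product (= Borel) σ-algebra. -/
instance matrixMeasurableSpace {d : ℕ} : MeasurableSpace (Matrix (Fin d) (Fin d) ℝ) :=
  inferInstanceAs (MeasurableSpace (Fin d → Fin d → ℝ))

/-- The truncation function `h(z) = z 1_{|z| ≤ 1}`. -/
def trunc {d : ℕ} (z : Eu d) : Eu d := if ‖z‖ ≤ 1 then z else 0

/-- `F` is a Lévy measure on `ℝ^d`: `F({0}) = 0` and `∫ |z|² ∧ 1 F(dz) < ∞`. -/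
def IsLevyMeasure {d : ℕ} (F : Measure (Eu d)) : Prop :=
  F {0} = 0 ∧ (∫⁻ z, ENNReal.ofReal (min (‖z‖ ^ 2) 1) ∂F) < ⊤

/-- `Θ` is a set of Lévy triplets `(b, c, F)`: `c` is symmetric nonnegative definite and
`F` is a Lévy measure. -/
def IsLevyTripletSet {d : ℕ}
    (Θ : Set (Eu d × Matrix (Fin d) (Fin d) ℝ × Measure (Eu d))) : Prop :=
  ∀ x ∈ Θ, x.2.1.PosSemidef ∧ IsLevyMeasure x.2.2

/-- The condition `𝒦 = sup_{(b,c,F) ∈ Θ} { ∫ |z| ∧ |z|² F(dz) + |b| + |c| } < ∞`. -/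
def HasUniformBound {d : ℕ}
    (Θ : Set (Eu d × Matrix (Fin d) (Fin d) ℝ × Measure (Eu d))) : Prop :=
  ∃ K : ℝ≥0, ∀ x ∈ Θ,
    (∫⁻ z, ENNReal.ofReal (min ‖z‖ (‖z‖ ^ 2)) ∂x.2.2)
      + ENNReal.ofReal ‖x.1‖ + ∑ i, ∑ j, ENNReal.ofReal |x.2.1 i j| ≤ K

/-- The condition `𝒦_ε := sup_{F ∈ Θ₃} ∫_{|z| ≤ ε} |z|² F(dz) → 0` as `ε ↓ 0`. -/
def HasVanishingSmallJumps {d : ℕ}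
    (Θ : Set (Eu d × Matrix (Fin d) (Fin d) ℝ × Measure (Eu d))) : Prop :=
  Tendsto (fun ε : ℝ => ⨆ x ∈ Θ, ∫⁻ z in {z : Eu d | ‖z‖ ≤ ε},
      ((‖z‖₊ : ℝ≥0∞) ^ 2) ∂x.2.2)
    (nhdsWithin 0 (Set.Ioi 0)) (nhds 0)

/-- The nonlinearity
`G(p,q,f) = sup_{(b,c,F) ∈ Θ} { p·b + ½ tr[q c] + ∫ [f(z) - f(0) - D f(0)·h(z)] F(dz) }`. -/
def Gop {d : ℕ} (Θ : Set (Eu d × Matrix (Fin d) (Fin d) ℝ × Measure (Eu d)))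
    (p : Eu d) (q : Matrix (Fin d) (Fin d) ℝ) (f : Eu d → ℝ) : ℝ :=
  sSup {r : ℝ | ∃ x ∈ Θ,
    r = (∑ i, p i * x.1 i) + (1 / 2) * (q * x.2.1).trace
      + ∫ z, (f z - f 0 - fderiv ℝ f 0 (trunc z)) ∂x.2.2}

/-- The approximating nonlinearity `G^κ(p,q,f,g)`, where jumps of size `≤ κ` are handled
with the test function `g` and jumps of size `> κ` with `f`. -/
def Gkop {d : ℕ} (Θ : Set (Eu d × Matrix (Fin d) (Fin d) ℝ × Measure (Eu d)))
    (κ : ℝ) (p : Eu d) (q : Matrix (Fin d) (Fin d) ℝ) (f g : Eu d → ℝ) : ℝ :=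
  sSup {r : ℝ | ∃ x ∈ Θ,
    r = (∑ i, p i * x.1 i) + (1 / 2) * (q * x.2.1).trace
      + (∫ z in {z : Eu d | κ < ‖z‖}, (f z - f 0 - fderiv ℝ g 0 (trunc z)) ∂x.2.2)
      + (∫ z in {z : Eu d | ‖z‖ ≤ κ}, (g z - g 0 - fderiv ℝ g 0 (trunc z)) ∂x.2.2)}

/-- `f ∈ C^{1,2}((0,∞) × ℝ^d)`: jointly continuous, continuously differentiable in `t`
and twice continuously differentiable in `x` on `(0,∞) × ℝ^d`. -/
def IsC12 {d : ℕ} (f : ℝ → Eu d → ℝ) : Prop :=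
  ContinuousOn (fun pt : ℝ × Eu d => f pt.1 pt.2) (Set.Ioi 0 ×ˢ Set.univ) ∧
  (∀ x, ContDiffOn ℝ 1 (fun t => f t x) (Set.Ioi 0)) ∧
  (∀ t ∈ Set.Ioi (0 : ℝ), ContDiff ℝ 2 (f t)) ∧
  ContinuousOn (fun pt : ℝ × Eu d => fderiv ℝ (f pt.1) pt.2) (Set.Ioi 0 ×ˢ Set.univ) ∧
  ContinuousOn (fun pt : ℝ × Eu d => fderiv ℝ (fderiv ℝ (f pt.1)) pt.2)
    (Set.Ioi 0 ×ˢ Set.univ)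

/-- `f ∈ C_b^{1,2}((0,∞) × ℝ^d)`: `f ∈ C^{1,2}` with `f` and its derivatives bounded. -/
def IsC12b {d : ℕ} (f : ℝ → Eu d → ℝ) : Prop :=
  IsC12 f ∧
  ∃ C : ℝ, ∀ t ∈ Set.Ioi (0 : ℝ), ∀ x,
    |f t x| ≤ C ∧ |deriv (fun s => f s x) t| ≤ C ∧
    ‖fderiv ℝ (f t) x‖ ≤ C ∧ ‖fderiv ℝ (fderiv ℝ (f t)) x‖ ≤ C

/-- `f` is a bounded semicontinuous (upper or lower) function on `(0,∞) × ℝ^d`. -/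
def IsBoundedSC {d : ℕ} (f : ℝ → Eu d → ℝ) : Prop :=
  (UpperSemicontinuousOn (fun pt : ℝ × Eu d => f pt.1 pt.2) (Set.Ioi 0 ×ˢ Set.univ) ∨
    LowerSemicontinuousOn (fun pt : ℝ × Eu d => f pt.1 pt.2) (Set.Ioi 0 ×ˢ Set.univ)) ∧
  ∃ C : ℝ, ∀ t ∈ Set.Ioi (0 : ℝ), ∀ x, |f t x| ≤ C

/-!
`G(p, q, f)` is the supremum over `Θ` of the functionals
`(b, c, F) ↦ p·b + ½ tr[q c] + ∫ [f(z) - f(0) - Df(0)·h(z)] F(dz)`, and a supremum moves by at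
most the uniform distance of the functionals, so it suffices that these converge uniformly on
`Θ`. The bound `𝒦` gives this for the drift and diffusion terms. For the jump term, write
`u_k = f_k(t_k, x_k + ·) - f(t, x + ·)` and let `C` bound `|u_k|`; its integrand is at most
`(‖D²u_k‖_{B(0,1)} + 2 sup_{B(0,R)} |u_k| + 2C/R) · (|z| ∧ |z|²)`, so its integral is at most
`𝒦` times a constant that is eventually small once `R` is chosen large.
-/

section Calculus

variable {E : Type*} [NormedAddCommGroup E] [NormedSpace ℝ E]

/-- Mean value inequality for `φ - φ'(0)`, whose derivative `φ' - φ'(0)` is in turn controlled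
by the mean value inequality for `φ'`. -/
lemma abs_sub_sub_fderiv_le {φ : E → ℝ} (hφ : ContDiff ℝ 2 φ) {M : ℝ} {z : E}
    (hM : ∀ y ∈ Metric.closedBall (0 : E) ‖z‖, ‖fderiv ℝ (fderiv ℝ φ) y‖ ≤ M) :
    |φ z - φ 0 - fderiv ℝ φ 0 z| ≤ M * ‖z‖ ^ 2 := by
  have hd : Differentiable ℝ φ := hφ.differentiable (by norm_num)
  have hd' : Differentiable ℝ (fderiv ℝ φ) :=
    (hφ.fderiv_right (m := 1) (by norm_num)).differentiable (by norm_num)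
  have hball := convex_closedBall (0 : E) ‖z‖
  have h0 : (0 : E) ∈ Metric.closedBall (0 : E) ‖z‖ := Metric.mem_closedBall_self (norm_nonneg z)
  have hz : z ∈ Metric.closedBall (0 : E) ‖z‖ := by simp
  have hM0 : 0 ≤ M := (norm_nonneg (fderiv ℝ (fderiv ℝ φ) 0)).trans (hM 0 h0)
  have hφ' : ∀ y ∈ Metric.closedBall (0 : E) ‖z‖, ‖fderiv ℝ φ y - fderiv ℝ φ 0‖ ≤ M * ‖z‖ := by
    intro y hy
    calc ‖fderiv ℝ φ y - fderiv ℝ φ 0‖ ≤ M * ‖y - 0‖ :=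
          hball.norm_image_sub_le_of_norm_fderiv_le (fun u _ => hd' u) hM h0 hy
      _ ≤ M * ‖z‖ := by
          gcongr
          simpa using hy
  have key := hball.norm_image_sub_le_of_norm_hasFDerivWithin_le
    (f := fun y => φ y - fderiv ℝ φ 0 y)
    (fun u _ => ((hd u).hasFDerivAt.sub (fderiv ℝ φ 0).hasFDerivAt).hasFDerivWithinAt) hφ' h0 hz
  calc |φ z - φ 0 - fderiv ℝ φ 0 z| = ‖(φ z - fderiv ℝ φ 0 z) - (φ 0 - fderiv ℝ φ 0 0)‖ := by
        rw [map_zero, Real.norm_eq_abs]; ring_nf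
    _ ≤ M * ‖z‖ * ‖z - 0‖ := key
    _ = M * ‖z‖ ^ 2 := by rw [sub_zero]; ring

lemma fderiv_fderiv_sub {φ ψ : E → ℝ} (hφ : ContDiff ℝ 2 φ) (hψ : ContDiff ℝ 2 ψ) :
    fderiv ℝ (fderiv ℝ (φ - ψ)) = fderiv ℝ (fderiv ℝ φ) - fderiv ℝ (fderiv ℝ ψ) := by
  have hd : ∀ {u : E → ℝ}, ContDiff ℝ 2 u → Differentiable ℝ (fderiv ℝ u) := fun hu =>
    (hu.fderiv_right (m := 1) (by norm_num)).differentiable (by norm_num)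
  have h1 : fderiv ℝ (φ - ψ) = fderiv ℝ φ - fderiv ℝ ψ := by
    ext1 y
    exact fderiv_sub (hφ.differentiable (by norm_num) y) (hψ.differentiable (by norm_num) y)
  ext1 y
  rw [h1]
  exact fderiv_sub (hd hφ y) (hd hψ y)

lemma fderiv_fderiv_comp_add_left (u : E → ℝ) (a : E) :
    fderiv ℝ (fderiv ℝ fun z => u (a + z)) = fun y => fderiv ℝ (fderiv ℝ u) (a + y) := by
  have h : fderiv ℝ (fun z => u (a + z)) = fun z => fderiv ℝ u (a + z) :=
    funext fun z => fderiv_comp_add_left a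
  exact h ▸ funext fun y => fderiv_comp_add_left a

end Calculus

section Integration

variable {E : Type*} [NormedAddCommGroup E] [MeasurableSpace E] [OpensMeasurableSpace E]
  {F : Measure E} {φ : E → ℝ} {c : ℝ}

lemma integrable_of_abs_le_mul_min (hφ : AEStronglyMeasurable φ F)
    (hbound : ∀ z, |φ z| ≤ c * min ‖z‖ (‖z‖ ^ 2))
    (hF : ∫⁻ z, ENNReal.ofReal (min ‖z‖ (‖z‖ ^ 2)) ∂F ≠ ∞) : Integrable φ F := by
  have hw : Integrable (fun z : E => min ‖z‖ (‖z‖ ^ 2)) F := by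
    refine ⟨by fun_prop, ?_⟩
    rw [hasFiniteIntegral_iff_ofReal (Eventually.of_forall fun z => by positivity)]
    exact hF.lt_top
  exact (hw.const_mul c).mono' hφ (Eventually.of_forall hbound)

lemma abs_integral_le_of_abs_le_mul_min (hc : 0 ≤ c)
    (hbound : ∀ z, |φ z| ≤ c * min ‖z‖ (‖z‖ ^ 2)) {K : ℝ≥0}
    (hF : ∫⁻ z, ENNReal.ofReal (min ‖z‖ (‖z‖ ^ 2)) ∂F ≤ K) : |∫ z, φ z ∂F| ≤ c * K := by
  have hw : Integrable (fun z : E => min ‖z‖ (‖z‖ ^ 2)) F :=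
    integrable_of_abs_le_mul_min (c := 1) (by fun_prop) (fun z => by simp [abs_of_nonneg])
      (ne_top_of_le_ne_top ENNReal.coe_ne_top hF)
  have hwK : ∫ z, min ‖z‖ (‖z‖ ^ 2) ∂F ≤ K := by
    rw [integral_eq_lintegral_of_nonneg_ae (Eventually.of_forall fun z => by positivity)
      (by fun_prop)]
    exact ENNReal.toReal_le_of_le_ofReal K.coe_nonneg (by simpa using hF)
  calc |∫ z, φ z ∂F| ≤ ∫ z, |φ z| ∂F := abs_integral_le_integral_abs
    _ ≤ ∫ z, c * min ‖z‖ (‖z‖ ^ 2) ∂F := integral_mono_of_nonneg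
        (Eventually.of_forall fun z => abs_nonneg _) (hw.const_mul c) (Eventually.of_forall hbound)
    _ = c * ∫ z, min ‖z‖ (‖z‖ ^ 2) ∂F := integral_const_mul c _
    _ ≤ c * K := mul_le_mul_of_nonneg_left hwK hc

end Integration

section JumpIntegral

variable {d : ℕ}

def jumpIntegrand (φ : Eu d → ℝ) (z : Eu d) : ℝ := φ z - φ 0 - fderiv ℝ φ 0 (trunc z)

def jumpIntegral (φ : Eu d → ℝ) (F : Measure (Eu d)) : ℝ := ∫ z, jumpIntegrand φ z ∂F

lemma measurable_trunc : Measurable (trunc (d := d)) :=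
  Measurable.ite (measurableSet_le measurable_norm measurable_const) measurable_id measurable_const

lemma measurable_jumpIntegrand {φ : Eu d → ℝ} (hφ : Continuous φ) :
    Measurable (jumpIntegrand φ) :=
  (hφ.measurable.sub_const _).sub ((fderiv ℝ φ 0).continuous.measurable.comp measurable_trunc)

lemma jumpIntegrand_sub {φ ψ : Eu d → ℝ} (hφ : DifferentiableAt ℝ φ 0)
    (hψ : DifferentiableAt ℝ ψ 0) :
    jumpIntegrand (φ - ψ) = jumpIntegrand φ - jumpIntegrand ψ := by
  ext z
  simp only [jumpIntegrand, fderiv_sub hφ hψ, Pi.sub_apply, sub_apply]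
  ring

lemma abs_jumpIntegrand_le {φ : Eu d → ℝ} (hφ : ContDiff ℝ 2 φ) {η₁ η₂ C R : ℝ} (hR : 1 ≤ R)
    (hD2 : ∀ y ∈ Metric.closedBall (0 : Eu d) 1, ‖fderiv ℝ (fderiv ℝ φ) y‖ ≤ η₁)
    (hloc : ∀ y ∈ Metric.closedBall (0 : Eu d) R, |φ y| ≤ η₂) (hC : ∀ y, |φ y| ≤ C) (z : Eu d) :
    |jumpIntegrand φ z| ≤ (η₁ + 2 * η₂ + 2 * C / R) * min ‖z‖ (‖z‖ ^ 2) := by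
  have hR0 : 0 < R := one_pos.trans_le hR
  have h0 : (0 : Eu d) ∈ Metric.closedBall 0 1 := Metric.mem_closedBall_self zero_le_one
  have hη₁ : 0 ≤ η₁ := (norm_nonneg (fderiv ℝ (fderiv ℝ φ) 0)).trans (hD2 0 h0)
  have hη₂ : 0 ≤ η₂ := (abs_nonneg _).trans (hloc 0 (Metric.mem_closedBall_self hR0.le))
  have hC0 : 0 ≤ C := (abs_nonneg _).trans (hC 0)
  have hCR : 0 ≤ 2 * C / R := by positivity
  have hsub : ∀ {B}, |φ z| ≤ B → |φ 0| ≤ B → |φ z - φ 0| ≤ 2 * B := fun hBz hB0 =>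
    (abs_sub _ _).trans (by linarith)
  rcases le_or_gt ‖z‖ 1 with h1 | h1
  · have hmin : min ‖z‖ (‖z‖ ^ 2) = ‖z‖ ^ 2 := min_eq_right (by nlinarith [norm_nonneg z])
    have htaylor := abs_sub_sub_fderiv_le hφ (M := η₁) (z := z) fun y hy =>
      hD2 y (Metric.closedBall_subset_closedBall h1 hy)
    rw [jumpIntegrand, trunc, if_pos h1, hmin]
    nlinarith [sq_nonneg ‖z‖]
  · have hmin : min ‖z‖ (‖z‖ ^ 2) = ‖z‖ := min_eq_left (by nlinarith)
    rw [jumpIntegrand, trunc, if_neg h1.not_ge, map_zero, sub_zero, hmin]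
    rcases le_or_gt ‖z‖ R with h2 | h2
    · have := hsub (hloc z (by simpa using h2)) (hloc 0 (Metric.mem_closedBall_self hR0.le))
      nlinarith
    · have := hsub (hC z) (hC 0)
      have : 2 * C ≤ 2 * C / R * ‖z‖ := by
        rw [div_mul_eq_mul_div, le_div_iff₀ hR0]
        nlinarith
      nlinarith

end JumpIntegral

section JumpIntegralBounds

variable {d : ℕ} {φ ψ : Eu d → ℝ} {C : ℝ} {F : Measure (Eu d)}

lemma exists_abs_jumpIntegrand_le (hφ : ContDiff ℝ 2 φ) (hC : ∀ y, |φ y| ≤ C) :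
    ∃ c, 0 ≤ c ∧ ∀ z, |jumpIntegrand φ z| ≤ c * min ‖z‖ (‖z‖ ^ 2) := by
  have hD2 : Continuous (fderiv ℝ (fderiv ℝ φ)) :=
    (hφ.fderiv_right (m := 1) (by norm_num)).continuous_fderiv one_ne_zero
  obtain ⟨M, hM⟩ := (isCompact_closedBall (0 : Eu d) 1).exists_bound_of_continuousOn
    (f := fderiv ℝ (fderiv ℝ φ)) hD2.continuousOn
  have hC0 : 0 ≤ C := (abs_nonneg _).trans (hC 0)
  have hM0 : 0 ≤ M :=
    (norm_nonneg _).trans (hM 0 (Metric.mem_closedBall_self zero_le_one))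
  exact ⟨M + 2 * C + 2 * C / 1, by positivity,
    abs_jumpIntegrand_le hφ le_rfl hM (fun y _ => hC y) hC⟩

lemma integrable_jumpIntegrand (hφ : ContDiff ℝ 2 φ) (hC : ∀ y, |φ y| ≤ C)
    (hF : ∫⁻ z, ENNReal.ofReal (min ‖z‖ (‖z‖ ^ 2)) ∂F ≠ ∞) : Integrable (jumpIntegrand φ) F :=
  have ⟨_, _, hc⟩ := exists_abs_jumpIntegrand_le hφ hC
  integrable_of_abs_le_mul_min (measurable_jumpIntegrand hφ.continuous).aestronglyMeasurable hc hF

lemma exists_abs_jumpIntegral_le (hφ : ContDiff ℝ 2 φ) (hC : ∀ y, |φ y| ≤ C) :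
    ∃ c, ∀ (K : ℝ≥0) (F : Measure (Eu d)),
      ∫⁻ z, ENNReal.ofReal (min ‖z‖ (‖z‖ ^ 2)) ∂F ≤ K → |jumpIntegral φ F| ≤ c * K :=
  have ⟨c, hc0, hc⟩ := exists_abs_jumpIntegrand_le hφ hC
  ⟨c, fun _ _ hF => abs_integral_le_of_abs_le_mul_min hc0 hc hF⟩

lemma jumpIntegral_sub (hφ : ContDiff ℝ 2 φ) (hψ : ContDiff ℝ 2 ψ) {C' : ℝ}
    (hφC : ∀ y, |φ y| ≤ C) (hψC : ∀ y, |ψ y| ≤ C')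
    (hF : ∫⁻ z, ENNReal.ofReal (min ‖z‖ (‖z‖ ^ 2)) ∂F ≠ ∞) :
    jumpIntegral (φ - ψ) F = jumpIntegral φ F - jumpIntegral ψ F := by
  rw [jumpIntegral, jumpIntegrand_sub (hφ.differentiable (by norm_num) 0)
    (hψ.differentiable (by norm_num) 0)]
  exact integral_sub (integrable_jumpIntegrand hφ hφC hF) (integrable_jumpIntegrand hψ hψC hF)

end JumpIntegralBounds

section UniformConvergence

variable {ι α : Type*} {l : Filter ι}

lemma tendstoUniformlyOn_of_dist_le {β : Type*} [PseudoMetricSpace β] {F : ι → α → β}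
    {f : α → β} {s : Set α} {δ : ι → ℝ} (hδ : Tendsto δ l (𝓝 0))
    (h : ∀ k, ∀ x ∈ s, dist (f x) (F k x) ≤ δ k) : TendstoUniformlyOn F f l s :=
  Metric.tendstoUniformlyOn_iff.2 fun _ hε =>
    (hδ.eventually (gt_mem_nhds hε)).mono fun k hk x hx => (h k x hx).trans_lt hk

/-- Evaluating along moving points `u k a → v a`: on a compact thickening of `K` inside `U` the
convergence `F k → f` is uniform and `f` is uniformly continuous. -/
lemma TendstoLocallyUniformlyOn.tendstoUniformlyOn_comp {X V : Type*} [PseudoMetricSpace X]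
    [ProperSpace X] [PseudoMetricSpace V] {F : ι → X → V} {f : X → V} {U K : Set X}
    (hF : TendstoLocallyUniformlyOn F f l U) (hf : ContinuousOn f U) (hU : IsOpen U)
    (hK : IsCompact K) (hKU : K ⊆ U) {u : ι → α → X} {v : α → X} {s : Set α}
    (hvK : MapsTo v s K) (huv : TendstoUniformlyOn u v l s) :
    TendstoUniformlyOn (fun k a => F k (u k a)) (fun a => f (v a)) l s := by
  obtain ⟨δ, hδ, hKδ⟩ := hK.exists_cthickening_subset_open hU hKU
  have hL : IsCompact (Metric.cthickening δ K) := hK.cthickening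
  have hFL : TendstoUniformlyOn F f l (Metric.cthickening δ K) :=
    (tendstoLocallyUniformlyOn_iff_forall_isCompact hU).1 hF _ hKδ hL
  have hfL := Metric.uniformContinuousOn_iff.1 (hL.uniformContinuousOn_of_continuous (hf.mono hKδ))
  refine Metric.tendstoUniformlyOn_iff.2 fun ε hε => ?_
  obtain ⟨η, hη, hfη⟩ := hfL (ε / 2) (half_pos hε)
  filter_upwards [Metric.tendstoUniformlyOn_iff.1 huv _ (lt_min hη hδ),
    Metric.tendstoUniformlyOn_iff.1 hFL _ (half_pos hε)] with k hu hFk a ha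
  have hva : v a ∈ Metric.cthickening δ K := Metric.self_subset_cthickening K (hvK ha)
  have hua : u k a ∈ Metric.cthickening δ K := Metric.mem_cthickening_of_dist_le _ _ _ _
    (hvK ha) (by rw [dist_comm]; exact (hu a ha).le.trans (min_le_right _ _))
  calc dist (f (v a)) (F k (u k a)) ≤ dist (f (v a)) (f (u k a)) + dist (f (u k a)) (F k (u k a)) :=
        dist_triangle _ _ _
    _ < ε / 2 + ε / 2 :=
        add_lt_add (hfη _ hva _ hua ((hu a ha).trans_le (min_le_left _ _))) (hFk _ hua)
    _ = ε := add_halves ε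

lemma tendsto_csSup_image_of_tendstoUniformlyOn {S : Set α} (hS : S.Nonempty)
    {Φ : ι → α → ℝ} {φ : α → ℝ}
    (hφ : BddAbove (φ '' S)) (h : TendstoUniformlyOn Φ φ l S) :
    Tendsto (fun k => sSup (Φ k '' S)) l (𝓝 (sSup (φ '' S))) := by
  refine Metric.tendsto_nhds.2 fun ε hε => ?_
  filter_upwards [Metric.tendstoUniformlyOn_iff.1 h (ε / 2) (half_pos hε)] with k hk
  have hk' : ∀ x ∈ S, |φ x - Φ k x| < ε / 2 := fun x hx => by simpa [Real.dist_eq] using hk x hx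
  obtain ⟨M, hM⟩ := hφ
  have hΦ : BddAbove (Φ k '' S) := ⟨M + ε / 2, forall_mem_image.2 fun x hx => by
    have := hM (mem_image_of_mem φ hx); have := abs_lt.1 (hk' x hx); linarith⟩
  have h1 : sSup (Φ k '' S) ≤ sSup (φ '' S) + ε / 2 := csSup_le (hS.image _) <|
    forall_mem_image.2 fun x hx => by
      have := le_csSup ⟨M, hM⟩ (mem_image_of_mem φ hx); have := abs_lt.1 (hk' x hx); linarith
  have h2 : sSup (φ '' S) ≤ sSup (Φ k '' S) + ε / 2 := csSup_le (hS.image _) <|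
    forall_mem_image.2 fun x hx => by
      have := le_csSup hΦ (mem_image_of_mem (Φ k) hx); have := abs_lt.1 (hk' x hx); linarith
  rw [Real.dist_eq, abs_sub_lt_iff]
  constructor <;> linarith

end UniformConvergence

section Coefficients

variable {ι : Type*} {l : Filter ι}

lemma TendstoLocallyUniformlyOn.tendstoUniformlyOn_translate {d : ℕ} {V : Type*}
    [PseudoMetricSpace V] {F : ι → ℝ × Eu d → V} {f : ℝ × Eu d → V}
    (hF : TendstoLocallyUniformlyOn F f l (Ioi 0 ×ˢ univ)) (hf : ContinuousOn f (Ioi 0 ×ˢ univ))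
    {t : ℝ} (ht : 0 < t) {x : Eu d} {tk : ι → ℝ} {xk : ι → Eu d}
    (htk : Tendsto tk l (𝓝 t)) (hxk : Tendsto xk l (𝓝 x)) (r : ℝ) :
    TendstoUniformlyOn (fun k y => F k (tk k, xk k + y)) (fun y => f (t, x + y)) l
      (Metric.closedBall 0 r) := by
  refine hF.tendstoUniformlyOn_comp hf (isOpen_Ioi.prod isOpen_univ)
    (isCompact_singleton.prod (isCompact_closedBall x r)) ?_ (fun y hy => ⟨rfl, ?_⟩)
    (tendstoUniformlyOn_of_dist_le (tendsto_iff_dist_tendsto_zero.1 (htk.prodMk_nhds hxk))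
      fun k y _ => ?_)
  · rintro ⟨s, y⟩ ⟨rfl, -⟩
    exact ⟨ht, trivial⟩
  · simpa using hy
  · simp [Prod.dist_eq, dist_comm]

lemma sum_mul_eq_inner {d : ℕ} (p b : Eu d) : ∑ i, p i * b i = inner ℝ p b := by
  simp [PiLp.inner_apply, mul_comm]

lemma tendstoUniformlyOn_sum_mul {d : ℕ} {p : ι → Eu d} {p₀ : Eu d} (hp : Tendsto p l (𝓝 p₀))
    (K : ℝ) :
    TendstoUniformlyOn (fun k (b : Eu d) => ∑ i, p k i * b i) (fun b => ∑ i, p₀ i * b i) l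
      (Metric.closedBall 0 K) := by
  refine tendstoUniformlyOn_of_dist_le (δ := fun k => ‖p k - p₀‖ * K)
    (by simpa using (tendsto_iff_norm_sub_tendsto_zero.1 hp).mul_const K) fun k b hb => ?_
  rw [Real.dist_eq, sum_mul_eq_inner, sum_mul_eq_inner, ← inner_sub_left, norm_sub_rev]
  exact (abs_real_inner_le_norm _ _).trans
    (mul_le_mul_of_nonneg_left (mem_closedBall_zero_iff.1 hb) (norm_nonneg _))

section MatrixNorm

attribute [local instance] Matrix.seminormedAddCommGroup

variable {n : Type*} [Fintype n]

lemma abs_trace_mul_le (A c : Matrix n n ℝ) : |(A * c).trace| ≤ ‖A‖ * ∑ i, ∑ j, |c i j| := by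
  calc |(A * c).trace| = |∑ i, ∑ j, A i j * c j i| := by simp [Matrix.trace, Matrix.mul_apply]
    _ ≤ ∑ i, ∑ j, |A i j * c j i| := (Finset.abs_sum_le_sum_abs _ _).trans
        (Finset.sum_le_sum fun i _ => Finset.abs_sum_le_sum_abs _ _)
    _ ≤ ∑ i, ∑ j, ‖A‖ * |c j i| := by
        gcongr with i _ j _
        rw [abs_mul, ← Real.norm_eq_abs (A i j)]
        gcongr
        exact Matrix.norm_entry_le_entrywise_sup_norm A
    _ = ‖A‖ * ∑ i, ∑ j, |c i j| := by
        rw [Finset.sum_comm]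
        simp only [Finset.mul_sum]

lemma tendstoUniformlyOn_half_trace_mul {q : ι → Matrix n n ℝ} {q₀ : Matrix n n ℝ}
    (hq : Tendsto q l (𝓝 q₀)) (K : ℝ) :
    TendstoUniformlyOn (fun k c => 1 / 2 * (q k * c).trace) (fun c => 1 / 2 * (q₀ * c).trace) l
      {c | ∑ i, ∑ j, |c i j| ≤ K} := by
  refine tendstoUniformlyOn_of_dist_le (δ := fun k => ‖q k - q₀‖ * K / 2)
    (by simpa using ((tendsto_iff_norm_sub_tendsto_zero.1 hq).mul_const K).div_const 2)
    fun k c hc => ?_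
  rw [Real.dist_eq, ← mul_sub, ← Matrix.trace_sub, ← Matrix.sub_mul, abs_mul,
    abs_of_pos one_half_pos, norm_sub_rev]
  have := (abs_trace_mul_le (q₀ - q k) c).trans (mul_le_mul_of_nonneg_left hc (norm_nonneg _))
  linarith

end MatrixNorm

end Coefficients

lemma tendstoUniformlyOn_jumpIntegral {ι : Type*} {l : Filter ι} {d : ℕ} {g : ι → Eu d → ℝ}
    {g₀ : Eu d → ℝ} {C C₀ : ℝ} (hg : ∀ k, ContDiff ℝ 2 (g k)) (hg₀ : ContDiff ℝ 2 g₀)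
    (hgC : ∀ k y, |g k y| ≤ C) (hg₀C : ∀ y, |g₀ y| ≤ C₀) (hconv : TendstoLocallyUniformly g g₀ l)
    (hD2 : TendstoUniformlyOn (fun k => fderiv ℝ (fderiv ℝ (g k))) (fderiv ℝ (fderiv ℝ g₀)) l
      (Metric.closedBall 0 1)) (K : ℝ≥0) :
    TendstoUniformlyOn (fun k => jumpIntegral (g k)) (jumpIntegral g₀) l
      {F | ∫⁻ z, ENNReal.ofReal (min ‖z‖ (‖z‖ ^ 2)) ∂F ≤ K} := by
  refine Metric.tendstoUniformlyOn_iff.2 fun ε hε => ?_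
  set c := ε / (K + 1)
  have hc : 0 < c := by positivity
  set R := max 1 (6 * (C + C₀) / c)
  have hR : 1 ≤ R := le_max_left _ _
  have hRc : 2 * (C + C₀) / R ≤ c / 3 := by
    rw [div_le_iff₀ (one_pos.trans_le hR)]
    have := (div_le_iff₀ hc).1 (le_max_right 1 (6 * (C + C₀) / c))
    linarith
  filter_upwards [(Metric.tendstoUniformlyOn_iff (F := fun k => fderiv ℝ (fderiv ℝ (g k)))).1
      hD2 _ (by positivity : 0 < c / 3),
    Metric.tendstoUniformlyOn_iff.1
      (tendstoLocallyUniformly_iff_forall_isCompact.1 hconv _ (isCompact_closedBall 0 R)) _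
      (by positivity : 0 < c / 6)] with k hD2k hk F hF
  have hFfin := ne_top_of_le_ne_top ENNReal.coe_ne_top hF
  have hpt : ∀ z, |jumpIntegrand (g k - g₀) z| ≤ c * min ‖z‖ (‖z‖ ^ 2) := fun z => by
    refine (abs_jumpIntegrand_le (φ := g k - g₀) ((hg k).sub hg₀) hR (η₁ := c / 3)
      (η₂ := c / 6) (C := C + C₀) (fun y hy => ?_) (fun y hy => ?_) (fun y => ?_) z).trans ?_
    · calc _ = dist (fderiv ℝ (fderiv ℝ g₀) y) (fderiv ℝ (fderiv ℝ (g k)) y) := by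
            rw [fderiv_fderiv_sub (hg k) hg₀, Pi.sub_apply, dist_comm]
            exact (dist_eq_norm (fderiv ℝ (fderiv ℝ (g k)) y) _).symm
        _ ≤ c / 3 := (hD2k y hy).le
    · rw [Pi.sub_apply, ← Real.dist_eq, dist_comm]
      exact (hk y hy).le
    · exact (abs_sub _ _).trans (add_le_add (hgC k y) (hg₀C y))
    · gcongr
      linarith
  rw [dist_comm, Real.dist_eq, ← jumpIntegral_sub (hg k) hg₀ (hgC k) hg₀C hFfin]
  calc |jumpIntegral (g k - g₀) F| ≤ c * K := abs_integral_le_of_abs_le_mul_min hc.le hpt hF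
    _ < ε := by
      rw [div_mul_eq_mul_div, div_lt_iff₀ (by positivity)]
      nlinarith [K.coe_nonneg]

section LevyFunctional

variable {d : ℕ}

def levyFunctional (p : Eu d) (q : Matrix (Fin d) (Fin d) ℝ) (φ : Eu d → ℝ)
    (ξ : Eu d × Matrix (Fin d) (Fin d) ℝ × Measure (Eu d)) : ℝ :=
  ∑ i, p i * ξ.1 i + 1 / 2 * (q * ξ.2.1).trace + jumpIntegral φ ξ.2.2

lemma Gop_eq_sSup_image (Θ : Set (Eu d × Matrix (Fin d) (Fin d) ℝ × Measure (Eu d)))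
    (p : Eu d) (q : Matrix (Fin d) (Fin d) ℝ) (φ : Eu d → ℝ) :
    Gop Θ p q φ = sSup (levyFunctional p q φ '' Θ) := by
  simp only [Gop, levyFunctional, jumpIntegral, jumpIntegrand, Set.image, eq_comm]

def boundedTriplets (K : ℝ≥0) : Set (Eu d × Matrix (Fin d) (Fin d) ℝ × Measure (Eu d)) :=
  Metric.closedBall 0 K ×ˢ {c | ∑ i, ∑ j, |c i j| ≤ (K : ℝ)} ×ˢ
    {F | ∫⁻ z, ENNReal.ofReal (min ‖z‖ (‖z‖ ^ 2)) ∂F ≤ K}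

lemma HasUniformBound.exists_subset_boundedTriplets
    {Θ : Set (Eu d × Matrix (Fin d) (Fin d) ℝ × Measure (Eu d))} (hΘ : HasUniformBound Θ) :
    ∃ K, Θ ⊆ boundedTriplets K := by
  obtain ⟨K, hK⟩ := hΘ
  refine ⟨K, fun ξ hξ => ?_⟩
  have h := hK ξ hξ
  have hreal : ∀ {a : ℝ}, ENNReal.ofReal a ≤ K → a ≤ K := fun ha =>
    by simpa using (ENNReal.ofReal_le_iff_le_toReal ENNReal.coe_ne_top).1 ha
  refine ⟨mem_closedBall_zero_iff.2 (hreal ((le_add_right (le_add_left le_rfl)).trans h)),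
    hreal ?_, (le_add_right (le_add_right le_rfl)).trans h⟩
  rw [ENNReal.ofReal_sum_of_nonneg fun i _ => by positivity]
  simp_rw [ENNReal.ofReal_sum_of_nonneg fun j _ => abs_nonneg _]
  exact (le_add_left le_rfl).trans h

lemma tendstoUniformlyOn_levyFunctional {ι : Type*} {l : Filter ι} {p : ι → Eu d} {p₀ : Eu d}
    {q : ι → Matrix (Fin d) (Fin d) ℝ} {q₀ : Matrix (Fin d) (Fin d) ℝ} {g : ι → Eu d → ℝ}
    {g₀ : Eu d → ℝ} {K : ℝ≥0} (hp : Tendsto p l (𝓝 p₀)) (hq : Tendsto q l (𝓝 q₀))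
    (hg : TendstoUniformlyOn (fun k => jumpIntegral (g k)) (jumpIntegral g₀) l
      {F | ∫⁻ z, ENNReal.ofReal (min ‖z‖ (‖z‖ ^ 2)) ∂F ≤ K}) :
    TendstoUniformlyOn (fun k => levyFunctional (p k) (q k) (g k)) (levyFunctional p₀ q₀ g₀) l
      (boundedTriplets K) := by
  have hdrift := ((tendstoUniformlyOn_sum_mul hp K).comp Prod.fst).mono
    fun ξ (hξ : ξ ∈ boundedTriplets K) => hξ.1
  have hdiffusion := ((tendstoUniformlyOn_half_trace_mul hq K).comp (Prod.fst ∘ Prod.snd)).mono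
    fun ξ (hξ : ξ ∈ boundedTriplets K) => hξ.2.1
  have hjump := (hg.comp (Prod.snd ∘ Prod.snd)).mono fun ξ (hξ : ξ ∈ boundedTriplets K) => hξ.2.2
  exact (hdrift.add hdiffusion).add hjump

section MatrixNorm

attribute [local instance] Matrix.seminormedAddCommGroup

lemma bddAbove_levyFunctional_image (p : Eu d) (q : Matrix (Fin d) (Fin d) ℝ) {φ : Eu d → ℝ}
    {C : ℝ} (hφ : ContDiff ℝ 2 φ) (hC : ∀ y, |φ y| ≤ C) (K : ℝ≥0) :
    BddAbove (levyFunctional p q φ '' boundedTriplets K) := by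
  obtain ⟨c, hc⟩ := exists_abs_jumpIntegral_le hφ hC
  refine ⟨‖p‖ * K + 1 / 2 * (‖q‖ * K) + c * K, forall_mem_image.2 fun ξ ⟨hb, hσ, hF⟩ => ?_⟩
  have hdrift : ∑ i, p i * ξ.1 i ≤ ‖p‖ * K := by
    rw [sum_mul_eq_inner]
    exact (real_inner_le_norm _ _).trans
      (mul_le_mul_of_nonneg_left (mem_closedBall_zero_iff.1 hb) (norm_nonneg _))
  have hdiffusion : (q * ξ.2.1).trace ≤ ‖q‖ * K :=
    (le_abs_self _).trans ((abs_trace_mul_le _ _).trans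
      (mul_le_mul_of_nonneg_left hσ (norm_nonneg _)))
  have hjump := (le_abs_self _).trans (hc K _ hF)
  simp only [levyFunctional]
  linarith

end MatrixNorm

end LevyFunctional

theorem G_condition_C1_general {d : ℕ}
    (Θ : Set (Eu d × Matrix (Fin d) (Fin d) ℝ × Measure (Eu d)))
    (hne : Θ.Nonempty)
    (hK : HasUniformBound Θ)
    (tk : ℕ → ℝ) (xk : ℕ → Eu d) (pk : ℕ → Eu d) (qk : ℕ → Matrix (Fin d) (Fin d) ℝ)
    {t : ℝ} (ht : 0 < t) (x : Eu d) (p : Eu d) (q : Matrix (Fin d) (Fin d) ℝ)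
    (htk0 : ∀ k, 0 < tk k)
    (htk : Tendsto tk atTop (nhds t)) (hxk : Tendsto xk atTop (nhds x))
    (hpk : Tendsto pk atTop (nhds p)) (hqk : Tendsto qk atTop (nhds q))
    (fk : ℕ → ℝ → Eu d → ℝ) (f : ℝ → Eu d → ℝ)
    (hfk : ∀ k, IsC12b (fk k)) (hf : IsC12b f)
    (hconv : TendstoLocallyUniformly (fun k z => fk k (tk k) (xk k + z))
      (fun z => f t (x + z)) atTop)
    (hD2 : TendstoLocallyUniformlyOn
      (fun k (pt : ℝ × Eu d) => fderiv ℝ (fderiv ℝ (fk k pt.1)) pt.2)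
      (fun pt => fderiv ℝ (fderiv ℝ (f pt.1)) pt.2) atTop (Set.Ioi 0 ×ˢ Set.univ))
    (hub : ∃ C, ∀ k s y, |fk k s y| ≤ C) :
    Tendsto (fun k => Gop Θ (pk k) (qk k) (fun z => fk k (tk k) (xk k + z))) atTop
      (nhds (Gop Θ p q (fun z => f t (x + z)))) := by
  obtain ⟨K, hΘK⟩ := hK.exists_subset_boundedTriplets
  obtain ⟨C, hC⟩ := hub
  obtain ⟨⟨-, -, hft, -, hfD2⟩, Cf, hCf⟩ := hf
  have hg : ∀ k, ContDiff ℝ 2 fun z => fk k (tk k) (xk k + z) := fun k =>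
    ((hfk k).1.2.2.1 _ (htk0 k)).comp (contDiff_const.add contDiff_id)
  have hg₀ : ContDiff ℝ 2 fun z => f t (x + z) := (hft t ht).comp (contDiff_const.add contDiff_id)
  have hjump := tendstoUniformlyOn_jumpIntegral hg hg₀ (fun k z => hC k _ _)
    (fun z => (hCf t ht _).1) hconv
    (by
      simp only [fderiv_fderiv_comp_add_left]
      exact hD2.tendstoUniformlyOn_translate (V := Eu d →L[ℝ] Eu d →L[ℝ] ℝ) hfD2 ht htk hxk 1) K
  simp only [Gop_eq_sSup_image]
  exact tendsto_csSup_image_of_tendstoUniformlyOn hne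
    ((bddAbove_levyFunctional_image p q hg₀ (fun z => (hCf t ht _).1) K).mono (image_mono hΘK))
    ((tendstoUniformlyOn_levyFunctional hpk hqk hjump).mono hΘK)

/-- **Statement 9** (Condition (C1) for `G`): continuity of the nonlinearity `G` along
suitable sequences. -/
theorem G_condition_C1 {d : ℕ}
    (Θ : Set (Eu d × Matrix (Fin d) (Fin d) ℝ × Measure (Eu d)))
    (hne : Θ.Nonempty) (hmeas : MeasurableSet Θ) (htrip : IsLevyTripletSet Θ)
    (hK : HasUniformBound Θ)
    (tk : ℕ → ℝ) (xk : ℕ → Eu d) (pk : ℕ → Eu d) (qk : ℕ → Matrix (Fin d) (Fin d) ℝ)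
    {t : ℝ} (ht : 0 < t) (x : Eu d) (p : Eu d) (q : Matrix (Fin d) (Fin d) ℝ)
    (hqsym : q.IsSymm) (hqksym : ∀ k, (qk k).IsSymm) (htk0 : ∀ k, 0 < tk k)
    (htk : Tendsto tk atTop (nhds t)) (hxk : Tendsto xk atTop (nhds x))
    (hpk : Tendsto pk atTop (nhds p)) (hqk : Tendsto qk atTop (nhds q))
    (fk : ℕ → ℝ → Eu d → ℝ) (f : ℝ → Eu d → ℝ)
    (hfk : ∀ k, IsC12b (fk k)) (hf : IsC12b f)
    (hconv : TendstoLocallyUniformly (fun k z => fk k (tk k) (xk k + z))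
      (fun z => f t (x + z)) atTop)
    (hD1 : TendstoLocallyUniformlyOn
      (fun k (pt : ℝ × Eu d) => fderiv ℝ (fk k pt.1) pt.2)
      (fun pt => fderiv ℝ (f pt.1) pt.2) atTop (Set.Ioi 0 ×ˢ Set.univ))
    (hD2 : TendstoLocallyUniformlyOn
      (fun k (pt : ℝ × Eu d) => fderiv ℝ (fderiv ℝ (fk k pt.1)) pt.2)
      (fun pt => fderiv ℝ (fderiv ℝ (f pt.1)) pt.2) atTop (Set.Ioi 0 ×ˢ Set.univ))
    (hub : ∃ C, ∀ k s y, |fk k s y| ≤ C) :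
    Tendsto (fun k => Gop Θ (pk k) (qk k) (fun z => fk k (tk k) (xk k + z))) atTop
      (nhds (Gop Θ p q (fun z => f t (x + z)))) :=
  G_condition_C1_general Θ hne hK tk xk pk qk ht x p q htk0 htk hxk hpk hqk fk f hfk hf hconv hD2
    hub
end
end

section
/- (Condition (C9) for G^κ.) Let Θ be a nonempty measurable set of Lévy triplets with 𝒦 := sup_{(b,c,F)∈Θ} { ∫_{ℝ^d} |z|∧|z|² F(dz) + |b| + |c| } < ∞ and such that 𝒦_ε := sup_{F ∈ Θ₃} ∫_{|z|≤ε} |z|² F(dz) → 0 as ε → 0, where Θ₃ is the projection of Θ onto 𝓛, and let G^κ, κ ∈ (0,1), be the associated approximating nonlinearities. Let (t,x,p,q) ∈ (0,∞)×ℝ^d×ℝ^d×S^d, let f be a bounded upper or lower semicontinuous function on (0,∞)×ℝ^d, and let g_1, g_2 ∈ C^{1,2}((0,∞)×ℝ^d) satisfy D_x g_1(t,x) = D_x g_2(t,x). Then lim_{κ→0} |G^κ(p,q, f(t,x+·), g_1(t,x+·)) − G^κ(p,q, f(t,x+·), g_2(t,x+·))| = 0. -/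
open MeasureTheory Filter Set
open scoped NNReal ENNReal Topology

noncomputable section

/-! Because `D_x g₁(t,x) = D_x g₂(t,x)`, the two suprema differ only through the integrals over
the jumps of size `≤ κ`, and two suprema differ by at most the supremum of the differences.
By Taylor's formula both integrands are `O(|z|²)` near `0`, so the difference is at most a
constant times `𝒦_κ`, which tends to `0`. -/

open Asymptotics Metric

theorem ContDiffAt.isBigO_sub_sub_fderiv_sq {E F : Type*} [NormedAddCommGroup E]
    [NormedSpace ℝ E] [NormedAddCommGroup F] [NormedSpace ℝ F] {g : E → F} {x : E}
    (hg : ContDiffAt ℝ 2 g x) :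
    (fun y => g y - g x - fderiv ℝ g x (y - x)) =O[𝓝 x] fun y => ‖y - x‖ ^ 2 := by
  obtain ⟨K, t, ht, hK⟩ := (hg.fderiv_right (m := 1) (by norm_num)).exists_lipschitzOnWith
  have hdiff : ∀ᶠ y in 𝓝 x, DifferentiableAt ℝ g y :=
    (hg.eventually (by simp)).mono fun y hy => hy.differentiableAt (by norm_num)
  obtain ⟨δ, hδ, hball⟩ := Metric.mem_nhds_iff.mp (inter_mem ht hdiff)
  refine IsBigO.of_bound K ?_
  filter_upwards [ball_mem_nhds x hδ] with y hy
  have hsub : closedBall x ‖y - x‖ ⊆ ball x δ :=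
    closedBall_subset_ball (by rwa [← dist_eq_norm])
  have hx : x ∈ closedBall x ‖y - x‖ := mem_closedBall_self (norm_nonneg _)
  have hy' : y ∈ closedBall x ‖y - x‖ := by rw [mem_closedBall, dist_eq_norm]
  have hmvt := (convex_closedBall x ‖y - x‖).norm_image_sub_le_of_norm_fderiv_le'
    (φ := fderiv ℝ g x) (C := K * ‖y - x‖) (fun z hz => (hball (hsub hz)).2) (fun z hz => ?_)
    hx hy'
  · rwa [norm_pow, norm_norm, sq, ← mul_assoc]
  rw [← dist_eq_norm]
  refine (hK.dist_le_mul z (hball (hsub hz)).1 x (hball (hsub hx)).1).trans ?_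
  gcongr
  rwa [← mem_closedBall]

theorem enorm_setIntegral_le_mul_lintegral_sq {E G : Type*} [NormedAddCommGroup E]
    [MeasurableSpace E] [NormedAddCommGroup G] [NormedSpace ℝ G] {μ : Measure E} {s : Set E}
    (hs : MeasurableSet s) {φ : E → G} {C : ℝ≥0} (hφ : ∀ z ∈ s, ‖φ z‖ ≤ C * ‖z‖ ^ 2) :
    ‖∫ z in s, φ z ∂μ‖ₑ ≤ C * ∫⁻ z in s, ‖z‖ₑ ^ 2 ∂μ :=
  calc ‖∫ z in s, φ z ∂μ‖ₑ ≤ ∫⁻ z in s, ‖φ z‖ₑ ∂μ := enorm_integral_le_lintegral_enorm _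
    _ ≤ ∫⁻ z in s, C * ‖z‖ₑ ^ 2 ∂μ := by
      refine setLIntegral_mono' hs fun z hz => ?_
      have : ‖φ z‖₊ ≤ C * ‖z‖₊ ^ 2 := by exact_mod_cast hφ z hz
      simpa [enorm_eq_nnnorm] using ENNReal.coe_le_coe.2 this
    _ = C * ∫⁻ z in s, ‖z‖ₑ ^ 2 ∂μ := lintegral_const_mul' _ _ ENNReal.coe_ne_top

theorem abs_sSup_sub_sSup_le {ι : Type*} {S : Set ι} {r₁ r₂ : ι → ℝ} {ε : ℝ} (hε : 0 ≤ ε)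
    (h : ∀ θ ∈ S, |r₁ θ - r₂ θ| ≤ ε) :
    |sSup {y | ∃ θ ∈ S, y = r₁ θ} - sSup {y | ∃ θ ∈ S, y = r₂ θ}| ≤ ε := by
  rcases S.eq_empty_or_nonempty with rfl | ⟨θ₀, hθ₀⟩
  · simpa using hε
  have bdd : ∀ {a b : ι → ℝ}, (∀ θ ∈ S, a θ ≤ b θ + ε) → BddAbove {y | ∃ θ ∈ S, y = b θ} →
      BddAbove {y | ∃ θ ∈ S, y = a θ} := by
    rintro a b hab ⟨M, hM⟩
    refine ⟨M + ε, ?_⟩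
    rintro _ ⟨θ, hθ, rfl⟩
    exact (hab θ hθ).trans (by gcongr; exact hM ⟨θ, hθ, rfl⟩)
  have le_add : ∀ {a b : ι → ℝ}, (∀ θ ∈ S, a θ ≤ b θ + ε) → BddAbove {y | ∃ θ ∈ S, y = b θ} →
      sSup {y | ∃ θ ∈ S, y = a θ} ≤ ε + sSup {y | ∃ θ ∈ S, y = b θ} := by
    intro a b hab hb
    refine csSup_le ⟨a θ₀, θ₀, hθ₀, rfl⟩ ?_
    rintro _ ⟨θ, hθ, rfl⟩
    exact (hab θ hθ).trans (by rw [add_comm]; gcongr; exact le_csSup hb ⟨θ, hθ, rfl⟩)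
  have h₁₂ : ∀ θ ∈ S, r₁ θ ≤ r₂ θ + ε := fun θ hθ => by linarith [(abs_le.mp (h θ hθ)).2]
  have h₂₁ : ∀ θ ∈ S, r₂ θ ≤ r₁ θ + ε := fun θ hθ => by linarith [(abs_le.mp (h θ hθ)).1]
  by_cases hb : BddAbove {y | ∃ θ ∈ S, y = r₂ θ}
  · rw [abs_sub_le_iff, sub_le_iff_le_add, sub_le_iff_le_add]
    exact ⟨le_add h₁₂ hb, le_add h₂₁ (bdd h₁₂ hb)⟩
  · rw [Real.sSup_of_not_bddAbove hb, Real.sSup_of_not_bddAbove fun ha => hb (bdd h₂₁ ha)]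
    simpa using hε

theorem eventually_enorm_setIntegral_taylor_le {d : ℕ} {g : Eu d → ℝ} (hg : ContDiffAt ℝ 2 g 0) :
    ∃ C : ℝ≥0, ∀ᶠ κ in 𝓝 (0 : ℝ), ∀ μ : Measure (Eu d),
      ‖∫ z in {z : Eu d | ‖z‖ ≤ κ}, (g z - g 0 - fderiv ℝ g 0 (trunc z)) ∂μ‖ₑ
        ≤ C * ∫⁻ z in {z : Eu d | ‖z‖ ≤ κ}, ‖z‖ₑ ^ 2 ∂μ := by
  obtain ⟨C, hC0, hC⟩ := hg.isBigO_sub_sub_fderiv_sq.exists_nonneg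
  lift C to ℝ≥0 using hC0
  have hsmall : ∀ᶠ κ in 𝓝 (0 : ℝ), ∀ z ∈ closedBall (0 : Eu d) κ,
      ‖g z - g 0 - fderiv ℝ g 0 z‖ ≤ C * ‖z‖ ^ 2 :=
    (tendsto_closedBall_smallSets 0).eventually
      (eventually_smallSets_forall.2 (by simpa using hC.bound))
  refine ⟨C, ?_⟩
  filter_upwards [hsmall, eventually_le_nhds one_pos] with κ hκ hκ1 μ
  refine enorm_setIntegral_le_mul_lintegral_sq (measurableSet_le measurable_norm measurable_const)
    fun z hz => ?_
  rw [trunc, if_pos (le_trans hz hκ1)]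
  exact hκ z (mem_closedBall_zero_iff.2 hz)

theorem abs_Gkop_sub_Gkop_le {d : ℕ} {Θ : Set (Eu d × Matrix (Fin d) (Fin d) ℝ × Measure (Eu d))}
    {κ : ℝ} {p : Eu d} {q : Matrix (Fin d) (Fin d) ℝ} {f g₁ g₂ : Eu d → ℝ}
    (hD : fderiv ℝ g₁ 0 = fderiv ℝ g₂ 0) {ε : ℝ} (hε : 0 ≤ ε)
    (h : ∀ θ ∈ Θ,
      |(∫ z in {z : Eu d | ‖z‖ ≤ κ}, (g₁ z - g₁ 0 - fderiv ℝ g₁ 0 (trunc z)) ∂θ.2.2)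
        - ∫ z in {z : Eu d | ‖z‖ ≤ κ}, (g₂ z - g₂ 0 - fderiv ℝ g₂ 0 (trunc z)) ∂θ.2.2| ≤ ε) :
    |Gkop Θ κ p q f g₁ - Gkop Θ κ p q f g₂| ≤ ε := by
  refine abs_sSup_sub_sSup_le hε fun θ hθ => ?_
  rw [hD] at h ⊢
  rw [add_sub_add_left_eq_sub]
  exact h θ hθ

theorem tendsto_Gkop_sub_Gkop {d : ℕ}
    {Θ : Set (Eu d × Matrix (Fin d) (Fin d) ℝ × Measure (Eu d))} (hΘ : HasVanishingSmallJumps Θ)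
    (p : Eu d) (q : Matrix (Fin d) (Fin d) ℝ) (f : Eu d → ℝ) {g₁ g₂ : Eu d → ℝ}
    (hD : fderiv ℝ g₁ 0 = fderiv ℝ g₂ 0) (hg₁ : ContDiffAt ℝ 2 g₁ 0)
    (hg₂ : ContDiffAt ℝ 2 g₂ 0) :
    Tendsto (fun κ => |Gkop Θ κ p q f g₁ - Gkop Θ κ p q f g₂|) (𝓝[>] 0) (𝓝 0) := by
  set S : ℝ → ℝ≥0∞ := fun κ => ⨆ θ ∈ Θ, ∫⁻ z in {z : Eu d | ‖z‖ ≤ κ}, (‖z‖₊ : ℝ≥0∞) ^ 2 ∂θ.2.2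
  obtain ⟨C₁, h₁⟩ := eventually_enorm_setIntegral_taylor_le hg₁
  obtain ⟨C₂, h₂⟩ := eventually_enorm_setIntegral_taylor_le hg₂
  have hS : Tendsto (fun κ => (C₁ + C₂ : ℝ≥0∞) * S κ) (𝓝[>] 0) (𝓝 0) := by
    simpa only [mul_zero] using ENNReal.Tendsto.const_mul (a := C₁ + C₂) hΘ (Or.inr (by finiteness))
  have hlim : Tendsto (fun κ => ((C₁ + C₂) * S κ).toReal) (𝓝[>] 0) (𝓝 0) :=
    (ENNReal.tendsto_toReal ENNReal.zero_ne_top).comp hS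
  refine squeeze_zero' (Eventually.of_forall fun _ => abs_nonneg _) ?_ hlim
  filter_upwards [nhdsWithin_le_nhds h₁, nhdsWithin_le_nhds h₂,
    hΘ.eventually_lt_const ENNReal.zero_lt_top] with κ hκ₁ hκ₂ hκS
  refine abs_Gkop_sub_Gkop_le hD ENNReal.toReal_nonneg fun θ hθ => ?_
  have hθS : ∫⁻ z in {z : Eu d | ‖z‖ ≤ κ}, ‖z‖ₑ ^ 2 ∂θ.2.2 ≤ S κ :=
    le_biSup (fun θ => ∫⁻ z in {z : Eu d | ‖z‖ ≤ κ}, (‖z‖₊ : ℝ≥0∞) ^ 2 ∂θ.2.2) hθ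
  rw [← Real.norm_eq_abs, ← toReal_enorm]
  refine ENNReal.toReal_mono (ENNReal.mul_ne_top ENNReal.coe_ne_top hκS.ne) ?_
  calc _ ≤ _ := enorm_sub_le
    _ ≤ C₁ * S κ + C₂ * S κ := by
      gcongr
      exacts [(hκ₁ θ.2.2).trans (by gcongr), (hκ₂ θ.2.2).trans (by gcongr)]
    _ = (C₁ + C₂) * S κ := (add_mul _ _ _).symm

theorem Gk_condition_C9_general {d : ℕ}
    (Θ : Set (Eu d × Matrix (Fin d) (Fin d) ℝ × Measure (Eu d)))
    (hKeps : HasVanishingSmallJumps Θ)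
    {t : ℝ} (ht : 0 < t) (x : Eu d) (p : Eu d)
    (q : Matrix (Fin d) (Fin d) ℝ)
    (f : ℝ → Eu d → ℝ)
    (g₁ g₂ : ℝ → Eu d → ℝ) (hg₁ : IsC12 g₁) (hg₂ : IsC12 g₂)
    (hD : fderiv ℝ (g₁ t) x = fderiv ℝ (g₂ t) x) :
    Tendsto (fun κ =>
        |Gkop Θ κ p q (fun z => f t (x + z)) (fun z => g₁ t (x + z))
          - Gkop Θ κ p q (fun z => f t (x + z)) (fun z => g₂ t (x + z))|)
      (nhdsWithin 0 (Set.Ioi 0)) (nhds 0) := by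
  have hshift : ∀ {g : ℝ → Eu d → ℝ}, IsC12 g → ContDiffAt ℝ 2 (fun z => g t (x + z)) 0 :=
    fun hg => ((hg.2.2.1 t ht).comp (contDiff_const.add contDiff_id)).contDiffAt
  refine tendsto_Gkop_sub_Gkop hKeps p q _ ?_ (hshift hg₁) (hshift hg₂)
  simp only [fderiv_comp_add_left, add_zero, hD]

/-- **Statement 14** (Condition (C9) for `G^κ`): if the small jumps vanish uniformly over
`Θ` and `D_x g₁(t,x) = D_x g₂(t,x)`, then `G^κ` does not distinguish `g₁` from `g₂` in
the limit `κ → 0`. -/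
theorem Gk_condition_C9 {d : ℕ}
    (Θ : Set (Eu d × Matrix (Fin d) (Fin d) ℝ × Measure (Eu d)))
    (hne : Θ.Nonempty) (hmeas : MeasurableSet Θ) (htrip : IsLevyTripletSet Θ)
    (hK : HasUniformBound Θ) (hKeps : HasVanishingSmallJumps Θ)
    {t : ℝ} (ht : 0 < t) (x : Eu d) (p : Eu d)
    (q : Matrix (Fin d) (Fin d) ℝ) (hq : q.IsSymm)
    (f : ℝ → Eu d → ℝ) (hf : IsBoundedSC f)
    (g₁ g₂ : ℝ → Eu d → ℝ) (hg₁ : IsC12 g₁) (hg₂ : IsC12 g₂)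
    (hD : fderiv ℝ (g₁ t) x = fderiv ℝ (g₂ t) x) :
    Tendsto (fun κ =>
        |Gkop Θ κ p q (fun z => f t (x + z)) (fun z => g₁ t (x + z))
          - Gkop Θ κ p q (fun z => f t (x + z)) (fun z => g₂ t (x + z))|)
      (nhdsWithin 0 (Set.Ioi 0)) (nhds 0) :=
  Gk_condition_C9_general Θ hKeps ht x p q f g₁ g₂ hg₁ hg₂ hD
end
end
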